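/- Let A ∈ ℝ^{n×n} be invertible, let B ∈ ℝ^{n×m}, let W be a subspace of ℝ^n, and let C̃ ∈ ℝ^{n×n} be a matrix whose range is contained in W. Let R = A C̃ + C̃ Aᵀ + B Bᵀ. If q ∈ ℝ^n satisfies A⁻¹ R q = λ q for some λ ≠ 0, then q lies in the subspace W + A⁻¹·W + Range(A⁻¹B), where A⁻¹·W denotes the image of W under A⁻¹ and Range(A⁻¹B) the column span of A⁻¹B. (This is the key single-iteration step in the proof of Proposition 2.2 of the paper.) -/

import Mathlib

open Matrix

/-! Multiplying the residual by `A⁻¹` gives `C̃ + A⁻¹ C̃ Aᵀ + (A⁻¹B) Bᵀ`, whose three terms have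
ranges in `W`, `A⁻¹·W` and `Range(A⁻¹B)`. An eigenvector for a nonzero eigenvalue lies in the
range of its operator, hence in the sum of these three subspaces. -/

theorem Module.End.mem_range_of_apply_eq_smul {K M : Type*} [DivisionRing K] [AddCommGroup M]
    [Module K M] {f : Module.End K M} {q : M} {lam : K} (hlam : lam ≠ 0) (h : f q = lam • q) :
    q ∈ LinearMap.range f :=
  ⟨lam⁻¹ • q, by rw [map_smul, h, smul_smul, inv_mul_cancel₀ hlam, one_smul]⟩

namespace Matrix

variable {R n m : Type*} [CommRing R] [Fintype n] [DecidableEq n] [Fintype m]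

def lyapunovResidual (A : Matrix n n R) (B : Matrix n m R) (C : Matrix n n R) : Matrix n n R :=
  A * C + C * Aᵀ + B * Bᵀ

theorem inv_mul_lyapunovResidual {A : Matrix n n R} (hA : IsUnit A.det) (B : Matrix n m R)
    (C : Matrix n n R) : A⁻¹ * lyapunovResidual A B C = C + A⁻¹ * C * Aᵀ + A⁻¹ * B * Bᵀ := by
  rw [lyapunovResidual, Matrix.mul_add, Matrix.mul_add, ← Matrix.mul_assoc, nonsing_inv_mul A hA,
    Matrix.one_mul, Matrix.mul_assoc A⁻¹ C, Matrix.mul_assoc A⁻¹ B]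

omit [DecidableEq n] in
theorem range_mulVecLin_mul_le {l : Type*} (X : Matrix l n R) (Y : Matrix n m R) :
    LinearMap.range (X * Y).mulVecLin ≤ LinearMap.range X.mulVecLin := by
  rw [mulVecLin_mul]
  exact LinearMap.range_comp_le_range _ _

omit [DecidableEq n] in
theorem range_mulVecLin_mul_mul_le {l k : Type*} [Fintype k] (X : Matrix l n R)
    (Y : Matrix n k R) (Z : Matrix k m R) :
    LinearMap.range (X * Y * Z).mulVecLin ≤ (LinearMap.range Y.mulVecLin).map X.mulVecLin := by
  rw [← LinearMap.range_comp, ← mulVecLin_mul]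
  exact range_mulVecLin_mul_le _ _

end Matrix

/-- The key single-iteration step in the proof of Proposition 2.2 of the paper: if `A` is
invertible, the range of `C̃` is contained in a subspace `W`, and `q` satisfies
`A⁻¹ R q = lam q` with `lam ≠ 0`, where `R = A C̃ + C̃ Aᵀ + B Bᵀ` is the residual, then
`q ∈ W + A⁻¹·W + Range(A⁻¹B)`. -/
theorem inverse_residual_eigenvector_mem
    {n m : ℕ} (A : Matrix (Fin n) (Fin n) ℝ) (hA : IsUnit A.det)
    (B : Matrix (Fin n) (Fin m) ℝ)
    (W : Submodule ℝ (Fin n → ℝ)) (C : Matrix (Fin n) (Fin n) ℝ)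
    (hrange : LinearMap.range (Matrix.mulVecLin C) ≤ W)
    (q : Fin n → ℝ) (lam : ℝ) (hlam : lam ≠ 0)
    (heig : (A⁻¹ * (A * C + C * Aᵀ + B * Bᵀ)).mulVec q = lam • q) :
    q ∈ W ⊔ Submodule.map (Matrix.mulVecLin A⁻¹) W ⊔
      LinearMap.range (Matrix.mulVecLin (A⁻¹ * B)) := by
  have hq : q ∈ LinearMap.range (A⁻¹ * lyapunovResidual A B C).mulVecLin :=
    Module.End.mem_range_of_apply_eq_smul hlam heig
  rw [inv_mul_lyapunovResidual hA, mulVecLin_add, mulVecLin_add] at hq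
  have hAW : LinearMap.range (A⁻¹ * C * Aᵀ).mulVecLin ≤ W.map A⁻¹.mulVecLin :=
    (range_mulVecLin_mul_mul_le _ _ _).trans (Submodule.map_mono hrange)
  refine (LinearMap.range_add_le _ _).trans (sup_le_sup ?_ (range_mulVecLin_mul_le _ _)) hq
  exact (LinearMap.range_add_le _ _).trans (sup_le_sup hrange hAW)
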